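/- Let X be a finite nonempty set, W = W(X) the free monoid on X, and F = A × W the free right W-act with finite nonempty basis A. Let P ⊆ F be a subact such that the complement F ∖ P is finite, and let B_P be the canonical basis of P. Then B_P is finite and |B_P| = |A| + |F ∖ P|·(|X| − 1); that is, rk P = rk F + |F ∖ P|·(rk W − 1). -/

import Mathlib

/-- A subset `P` of the free right act `F = A × W(X)` (with action `(a,w)·u = (a, w*u)`)
is a subact if it is closed under the action of the free monoid `W(X)`. -/
def IsSubact {A X : Type*} (P : Set (A × FreeMonoid X)) : Prop :=
  ∀ p ∈ P, ∀ u : FreeMonoid X, (p.1, p.2 * u) ∈ P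

/-- The canonical basis of a subact `P` of the free act `A × W(X)`. -/
def canonicalBasis {A X : Type*} (P : Set (A × FreeMonoid X)) : Set (A × FreeMonoid X) :=
  {p | p ∈ P ∧ (p.2 = 1 ∨
    ∃ (w : FreeMonoid X) (x : X), p.2 = w * FreeMonoid.of x ∧ (p.1, w) ∉ P)}

/-!
`F` is a forest of `|A|` rooted trees: the roots are the `(a, 1)` and the children of `(a, w)` are
the `|X|` elements `(a, w x)`. Since `P` is closed under the action, `Pᶜ` is closed under taking
parents, and an element of `F` lies in `canonicalBasis P ∪ Pᶜ` exactly when it is a root or its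
parent lies in `Pᶜ`. Hence `canonicalBasis P ∪ Pᶜ` is the disjoint union of the `|A|` roots and the
`|Pᶜ| · |X|` children of elements of `Pᶜ`, and subtracting `|Pᶜ|` gives the formula.
-/

open Set Function

namespace FreeMonoid

variable {α : Type*}

theorem mul_of_ne_one (w : FreeMonoid α) (x : α) : w * of x ≠ 1 := fun h => by
  simpa [length_mul, length_of] using congrArg length h

theorem mul_of_inj {w w' : FreeMonoid α} {x x' : α} :
    w * of x = w' * of x' ↔ w = w' ∧ x = x' := by
  refine ⟨fun h => ?_, fun ⟨hw, hx⟩ => hw ▸ hx ▸ rfl⟩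
  obtain ⟨hw, hx⟩ := List.append_inj' (congrArg toList h) rfl
  exact ⟨toList.injective hw, List.singleton_injective hx⟩

theorem eq_one_or_exists_eq_mul_of (w : FreeMonoid α) : w = 1 ∨ ∃ w' x, w = w' * of x :=
  List.eq_nil_or_concat' (toList w)

end FreeMonoid

section CanonicalBasis

variable {A X : Type*} {P : Set (A × FreeMonoid X)}

def appendLetter (q : (A × FreeMonoid X) × X) : A × FreeMonoid X :=
  (q.1.1, q.1.2 * FreeMonoid.of q.2)

theorem appendLetter_injective : Injective (appendLetter : (A × FreeMonoid X) × X → _) := by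
  rintro ⟨⟨a, w⟩, x⟩ ⟨⟨a', w'⟩, x'⟩ h
  obtain ⟨rfl, hw⟩ := Prod.mk.inj h
  obtain ⟨rfl, rfl⟩ := FreeMonoid.mul_of_inj.1 hw
  rfl

theorem disjoint_range_one_range_appendLetter :
    Disjoint (range fun a : A => (a, (1 : FreeMonoid X))) (range appendLetter) := by
  rw [disjoint_left]
  rintro _ ⟨a, rfl⟩ ⟨⟨⟨a', w⟩, x⟩, h⟩
  exact FreeMonoid.mul_of_ne_one w x (Prod.mk.inj h).2

theorem disjoint_canonicalBasis_compl : Disjoint (canonicalBasis P) Pᶜ :=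
  disjoint_left.2 fun _ hp hpc => hpc hp.1

theorem mem_canonicalBasis_one_iff {a : A} : (a, 1) ∈ canonicalBasis P ↔ (a, 1) ∈ P :=
  ⟨And.left, fun hp => ⟨hp, Or.inl rfl⟩⟩

theorem mem_canonicalBasis_mul_of_iff {a : A} {w : FreeMonoid X} {x : X} :
    (a, w * FreeMonoid.of x) ∈ canonicalBasis P ↔ (a, w * FreeMonoid.of x) ∈ P ∧ (a, w) ∉ P := by
  refine ⟨fun ⟨hp, hroot⟩ => ⟨hp, ?_⟩, fun ⟨hp, hw⟩ => ⟨hp, Or.inr ⟨w, x, rfl, hw⟩⟩⟩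
  obtain h1 | ⟨w', x', hwx, hw'⟩ := hroot
  · exact absurd h1 (FreeMonoid.mul_of_ne_one w x)
  · obtain ⟨rfl, -⟩ := FreeMonoid.mul_of_inj.1 hwx
    exact hw'

theorem canonicalBasis_union_compl (hP : IsSubact P) :
    canonicalBasis P ∪ Pᶜ =
      range (fun a : A => (a, (1 : FreeMonoid X))) ∪ appendLetter '' (Pᶜ ×ˢ univ) := by
  ext ⟨a, w⟩
  obtain rfl | ⟨w, x, rfl⟩ := FreeMonoid.eq_one_or_exists_eq_mul_of w
  · exact iff_of_true ((em _).imp_left mem_canonicalBasis_one_iff.2) (Or.inl ⟨a, rfl⟩)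
  have hroot : (a, w * FreeMonoid.of x) ∉ range fun a : A => (a, (1 : FreeMonoid X)) :=
    disjoint_right.1 disjoint_range_one_range_appendLetter ⟨((a, w), x), rfl⟩
  have hchild : (a, w * FreeMonoid.of x) ∈ appendLetter '' (Pᶜ ×ˢ univ) ↔ (a, w) ∉ P :=
    (appendLetter_injective.mem_set_image (a := ((a, w), x))).trans ⟨And.left, (⟨·, trivial⟩)⟩
  have hparent : (a, w * FreeMonoid.of x) ∉ P → (a, w) ∉ P := mt fun hw => hP _ hw _
  rw [mem_union, mem_union, mem_canonicalBasis_mul_of_iff, hchild, mem_compl_iff]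
  tauto

end CanonicalBasis

theorem rank_subact_general {A X : Type*} [Finite X] [Nonempty X] [Finite A]
    (P : Set (A × FreeMonoid X)) (hP : IsSubact P) (hco : (Pᶜ : Set (A × FreeMonoid X)).Finite) :
    (canonicalBasis P).Finite ∧
      (canonicalBasis P).ncard = Nat.card A + (Pᶜ : Set (A × FreeMonoid X)).ncard * (Nat.card X - 1) := by
  have hunion := canonicalBasis_union_compl hP
  have hfin : (canonicalBasis P).Finite :=
    ((finite_range _).union ((hco.prod finite_univ).image _)).subset (hunion ▸ subset_union_left)
  have hcount : (canonicalBasis P).ncard + Pᶜ.ncard = Nat.card A + Pᶜ.ncard * Nat.card X := by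
    rw [← ncard_union_eq disjoint_canonicalBasis_compl hfin hco, hunion,
      ncard_union_eq (disjoint_range_one_range_appendLetter.mono_right (image_subset_range _ _))
        (finite_range _) ((hco.prod finite_univ).image _),
      ncard_range_of_injective (fun _ _ h => (Prod.mk.inj h).1),
      ncard_image_of_injective _ appendLetter_injective, ncard_prod, ncard_univ]
  have hle : Pᶜ.ncard ≤ Pᶜ.ncard * Nat.card X := Nat.le_mul_of_pos_right _ Nat.card_pos
  refine ⟨hfin, ?_⟩
  rw [Nat.mul_sub_one]
  omega

/-- Schreier formula for subacts of free acts over free monoids: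
if `F ∖ P` is finite then `rk P = rk F + |F ∖ P| (rk W − 1)`. -/
theorem rank_subact {A X : Type*} [Finite X] [Nonempty X] [Finite A] [Nonempty A]
    (P : Set (A × FreeMonoid X)) (hP : IsSubact P) (hco : (Pᶜ : Set (A × FreeMonoid X)).Finite) :
    (canonicalBasis P).Finite ∧
      (canonicalBasis P).ncard = Nat.card A + (Pᶜ : Set (A × FreeMonoid X)).ncard * (Nat.card X - 1) :=
  rank_subact_general P hP hco
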